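/- For every real number x > 0, the integral H_{1,1}(x) = ∫₀^∞ (u+1)^{-1}(ux+1)^{-1} u^{1/2} du converges and equals π/(x + √x). -/

import Mathlib

open MeasureTheory Real Filter Set

lemma sqrt_tendsto_atTop : Tendsto Real.sqrt atTop atTop := by
  apply tendsto_atTop_atTop.2
  intro b
  exact ⟨b ^ 2, fun a ha => by
    calc b ≤ |b| := le_abs_self b
    _ = Real.sqrt (b ^ 2) := (Real.sqrt_sq_eq_abs b).symm
    _ ≤ Real.sqrt a := Real.sqrt_le_sqrt ha⟩

lemma arctan_sqrt_tendsto : Tendsto (fun u : ℝ => Real.arctan (Real.sqrt u)) atTop (nhds (π / 2)) :=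
  (tendsto_nhds_of_tendsto_nhdsWithin Real.tendsto_arctan_atTop).comp sqrt_tendsto_atTop

-- antiderivative for the case x ≠ 1
noncomputable def F (x : ℝ) (u : ℝ) : ℝ :=
  (2 / (x - 1)) * (Real.arctan (Real.sqrt u) - (Real.sqrt x)⁻¹ * Real.arctan (Real.sqrt x * Real.sqrt u))

lemma F_deriv (x : ℝ) (hx : 0 < x) (u : ℝ) (hu : u ∈ Set.Ioi (0:ℝ)) (hx1 : x ≠ 1) :
    HasDerivAt (F x) ((u + 1)⁻¹ * (u * x + 1)⁻¹ * u ^ ((1 : ℝ) / 2)) u := by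
  have hu0 : (0:ℝ) < u := hu
  have h1 : HasDerivAt Real.sqrt (1 / (2 * Real.sqrt u)) u := Real.hasDerivAt_sqrt hu0.ne'
  have h2 : HasDerivAt (fun u => Real.arctan (Real.sqrt u))
      (1 / (1 + Real.sqrt u ^ 2) * (1 / (2 * Real.sqrt u))) u :=
    (Real.hasDerivAt_arctan _).comp u h1
  have h3 : HasDerivAt (fun u => Real.arctan (Real.sqrt x * Real.sqrt u))
      (1 / (1 + (Real.sqrt x * Real.sqrt u) ^ 2) * (Real.sqrt x * (1 / (2 * Real.sqrt u)))) u :=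
    (Real.hasDerivAt_arctan _).comp u (h1.const_mul _)
  have h4 := ((h2.sub (h3.const_mul (Real.sqrt x)⁻¹)).const_mul (2 / (x - 1)))
  convert h4 using 1
  · rfl
  · rfl
  · rfl
  have e3 : u ^ ((1:ℝ)/2) = Real.sqrt u := (Real.sqrt_eq_rpow u).symm
  rw [e3]
  obtain ⟨s, hs, rfl⟩ : ∃ s : ℝ, 0 < s ∧ u = s ^ 2 :=
    ⟨Real.sqrt u, Real.sqrt_pos.2 hu0, (Real.sq_sqrt hu0.le).symm⟩
  obtain ⟨t, ht, rfl⟩ : ∃ t : ℝ, 0 < t ∧ x = t ^ 2 :=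
    ⟨Real.sqrt x, Real.sqrt_pos.2 hx, (Real.sq_sqrt hx.le).symm⟩
  rw [Real.sqrt_sq hs.le, Real.sqrt_sq ht.le]
  have hx1' : t ^ 2 - 1 ≠ 0 := sub_ne_zero.2 hx1
  have hu1 : s ^ 2 + 1 ≠ 0 := by positivity
  have hux : s ^ 2 * t ^ 2 + 1 ≠ 0 := by positivity
  have h5 : (1:ℝ) + s ^ 2 ≠ 0 := by positivity
  have h6 : (1:ℝ) + (t * s) ^ 2 ≠ 0 := by positivity
  field_simp
  ring


noncomputable def G (u : ℝ) : ℝ := Real.arctan (Real.sqrt u) - Real.sqrt u / (u + 1)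

lemma G_deriv (u : ℝ) (hu : u ∈ Set.Ioi (0:ℝ)) :
    HasDerivAt G ((u + 1)⁻¹ * (u * 1 + 1)⁻¹ * u ^ ((1 : ℝ) / 2)) u := by
  have hu0 : (0:ℝ) < u := hu
  have hu1 : u + 1 ≠ 0 := by positivity
  have h1 : HasDerivAt Real.sqrt (1 / (2 * Real.sqrt u)) u := Real.hasDerivAt_sqrt hu0.ne'
  have h2 : HasDerivAt (fun u => Real.arctan (Real.sqrt u))
      (1 / (1 + Real.sqrt u ^ 2) * (1 / (2 * Real.sqrt u))) u :=
    (Real.hasDerivAt_arctan _).comp u h1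
  have h3 : HasDerivAt (fun u : ℝ => u + 1) 1 u := (hasDerivAt_id u).add_const 1
  have h4 := h2.sub (h1.div h3 hu1)
  convert h4 using 1
  · rfl
  · rfl
  · rfl
  rw [show u ^ ((1:ℝ)/2) = Real.sqrt u from (Real.sqrt_eq_rpow u).symm]
  obtain ⟨s, hs, rfl⟩ : ∃ s : ℝ, 0 < s ∧ u = s ^ 2 :=
    ⟨Real.sqrt u, Real.sqrt_pos.2 hu0, (Real.sq_sqrt hu0.le).symm⟩
  rw [Real.sqrt_sq hs.le]
  have h5 : (1:ℝ) + s ^ 2 ≠ 0 := by positivity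
  have h6 : s ^ 2 + 1 ≠ 0 := by positivity
  field_simp
  ring

lemma integrand_nonneg (x : ℝ) (hx : 0 < x) (u : ℝ) (hu : u ∈ Set.Ioi (0:ℝ)) :
    0 ≤ (u + 1)⁻¹ * (u * x + 1)⁻¹ * u ^ ((1 : ℝ) / 2) := by
  have hu0 : (0:ℝ) < u := hu
  have : (0:ℝ) < u * x + 1 := by positivity
  have h2 : (0:ℝ) < u + 1 := by positivity
  exact mul_nonneg (mul_nonneg (inv_nonneg.2 h2.le) (inv_nonneg.2 this.le))
    (Real.rpow_nonneg hu0.le _)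

lemma sqrt_div_tendsto : Tendsto (fun u : ℝ => Real.sqrt u / (u + 1)) atTop (nhds 0) := by
  apply squeeze_zero' (g := fun u : ℝ => (Real.sqrt u)⁻¹)
  · filter_upwards [eventually_gt_atTop (0:ℝ)] with u hu
    positivity
  · filter_upwards [eventually_ge_atTop (1:ℝ)] with u hu
    have hu0 : (0:ℝ) < u := by linarith
    have hsu : (0:ℝ) < Real.sqrt u := Real.sqrt_pos.2 hu0
    rw [div_le_iff₀ (by linarith), inv_mul_eq_div, le_div_iff₀ hsu]
    have : Real.sqrt u * Real.sqrt u = u := Real.mul_self_sqrt hu0.le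
    nlinarith
  · exact tendsto_inv_atTop_zero.comp sqrt_tendsto_atTop

/-- For every real `x > 0`, the integral
`H₁₁(x) = ∫₀^∞ (u+1)⁻¹ (ux+1)⁻¹ u^(1/2) du` converges and equals `π / (x + √x)`. -/
theorem H_one_one_eval (x : ℝ) (hx : 0 < x) :
    IntegrableOn (fun u : ℝ => (u + 1)⁻¹ * (u * x + 1)⁻¹ * u ^ ((1 : ℝ) / 2))
      (Set.Ioi 0) ∧
    ∫ u in Set.Ioi (0 : ℝ), (u + 1)⁻¹ * (u * x + 1)⁻¹ * u ^ ((1 : ℝ) / 2) =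
      Real.pi / (x + Real.sqrt x) := by
  by_cases hx1 : x = 1
  · subst hx1
    have hcont : ContinuousWithinAt G (Set.Ici 0) 0 := by
      apply ContinuousAt.continuousWithinAt
      apply ContinuousAt.sub
      · exact (Real.continuous_arctan.comp Real.continuous_sqrt).continuousAt
      · exact Real.continuous_sqrt.continuousAt.div (by fun_prop) (by norm_num)
    have hderiv := fun u hu => G_deriv u hu
    have hpos := fun u hu => integrand_nonneg 1 one_pos u hu
    have htend : Tendsto G atTop (nhds (π / 2)) := by
      have := arctan_sqrt_tendsto.sub sqrt_div_tendsto
      show Tendsto (fun u : ℝ => Real.arctan (Real.sqrt u) - Real.sqrt u / (u + 1)) atTop (nhds (π / 2))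
      simpa using this
    refine ⟨integrableOn_Ioi_deriv_of_nonneg hcont hderiv hpos htend, ?_⟩
    rw [integral_Ioi_of_hasDerivAt_of_nonneg hcont hderiv hpos htend]
    simp [G, Real.sqrt_one, Real.arctan_zero]
    ring
  · have hsx : (0:ℝ) < Real.sqrt x := Real.sqrt_pos.2 hx
    have hcont : ContinuousWithinAt (F x) (Set.Ici 0) 0 := by
      apply Continuous.continuousWithinAt
      exact continuous_const.mul ((Real.continuous_arctan.comp Real.continuous_sqrt).sub
        (continuous_const.mul (Real.continuous_arctan.comp (continuous_const.mul Real.continuous_sqrt))))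
    have hderiv := fun u hu => F_deriv x hx u hu hx1
    have hpos := fun u hu => integrand_nonneg x hx u hu
    have htend : Tendsto (F x) atTop
        (nhds ((2 / (x - 1)) * (π / 2 - (Real.sqrt x)⁻¹ * (π / 2)))) := by
      have h1 : Tendsto (fun u : ℝ => Real.arctan (Real.sqrt x * Real.sqrt u)) atTop
          (nhds (π / 2)) := by
        apply (tendsto_nhds_of_tendsto_nhdsWithin Real.tendsto_arctan_atTop).comp
        exact Tendsto.const_mul_atTop hsx sqrt_tendsto_atTop
      exact ((arctan_sqrt_tendsto.sub (h1.const_mul _)).const_mul _)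
    refine ⟨integrableOn_Ioi_deriv_of_nonneg hcont hderiv hpos htend, ?_⟩
    rw [integral_Ioi_of_hasDerivAt_of_nonneg hcont hderiv hpos htend]
    have hF0 : F x 0 = 0 := by simp [F]
    rw [hF0, sub_zero]
    obtain ⟨t, ht, rfl⟩ : ∃ t : ℝ, 0 < t ∧ x = t ^ 2 :=
      ⟨Real.sqrt x, hsx, (Real.sq_sqrt hx.le).symm⟩
    rw [Real.sqrt_sq ht.le]
    have ht1 : t ≠ 1 := fun h => hx1 (by rw [h]; ring)
    have h1 : t ^ 2 - 1 ≠ 0 := sub_ne_zero.2 hx1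
    have h2 : t ^ 2 + t ≠ 0 := by positivity
    field_simp
    ring
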